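/- The approximating distribution p̂ is a probability mass function on X × W whose marginals agree with those of p: for every x ∈ X, ∑_w p̂(x,w) = p₁(x); for every w ∈ W, ∑_x p̂(x,w) = p₂(w); and consequently ∑_{x,w} p̂(x,w) = 1. -/

import Mathlib

open scoped BigOperators

noncomputable section

/-- Kullback–Leibler divergence `D(g‖h)` between nonnegative functions on a finite type,
`D(g‖h) = ∑_{t : g t > 0} g t * log (g t / h t)`, with the convention `D(g‖h) = ⊤`
whenever `g t > 0 = h t` for some `t`. -/
def KLdiv {T : Type*} [Fintype T] (g h : T → ℝ) : EReal :=
  if ∃ t, 0 < g t ∧ h t = 0 then ⊤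
  else ((∑ t ∈ Finset.univ.filter (fun t => 0 < g t),
      g t * Real.log (g t / h t) : ℝ) : EReal)

/-- Row marginal `p₁(x) = ∑_w p(x,w)`. -/
def marg₁ {A B : Type*} [Fintype B] (p : A × B → ℝ) (x : A) : ℝ := ∑ w, p (x, w)

/-- Column marginal `p₂(w) = ∑_x p(x,w)`. -/
def marg₂ {A B : Type*} [Fintype A] (p : A × B → ℝ) (w : B) : ℝ := ∑ x, p (x, w)

/-- Co-clustered distribution `p*(x*,w*) = ∑_{x : C_X x = x*} ∑_{w : C_W w = w*} p(x,w)`. -/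
def coclust {A B As Bs : Type*} [Fintype A] [Fintype B] [DecidableEq As] [DecidableEq Bs]
    (p : A × B → ℝ) (CX : A → As) (CW : B → Bs) : As × Bs → ℝ :=
  fun c => ∑ x ∈ Finset.univ.filter (fun x => CX x = c.1),
             ∑ w ∈ Finset.univ.filter (fun w => CW w = c.2), p (x, w)

/-- Approximating distribution
`p̂(x,w) = p*(C_X x, C_W w) · p₁(x) · p₂(w) / (p₁*(C_X x) · p₂*(C_W w))`. -/
def approx {A B As Bs : Type*} [Fintype A] [Fintype B] [Fintype As] [Fintype Bs]
    [DecidableEq As] [DecidableEq Bs]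
    (p : A × B → ℝ) (CX : A → As) (CW : B → Bs) : A × B → ℝ :=
  fun c =>
    coclust p CX CW (CX c.1, CW c.2) * marg₁ p c.1 * marg₂ p c.2 /
      (marg₁ (coclust p CX CW) (CX c.1) * marg₂ (coclust p CX CW) (CW c.2))

/-- Conditional distribution `p(w|x) = p(x,w)/p₁(x)` on `B`. -/
def condRow {A B : Type*} [Fintype B] (p : A × B → ℝ) (x : A) : B → ℝ :=
  fun w => p (x, w) / marg₁ p x

/-- Conditional distribution `p(x|w) = p(x,w)/p₂(w)` on `A`. -/
def condCol {A B : Type*} [Fintype A] (p : A × B → ℝ) (w : B) : A → ℝ :=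
  fun x => p (x, w) / marg₂ p w

/-- Conditional approximating distribution
`p̂(w|x*) = p*(x*, C_W w) · p₂(w) / (p₁*(x*) · p₂*(C_W w))` on `B`. -/
def approxCondRow {A B As Bs : Type*} [Fintype A] [Fintype B] [Fintype As] [Fintype Bs]
    [DecidableEq As] [DecidableEq Bs]
    (p : A × B → ℝ) (CX : A → As) (CW : B → Bs) (xs : As) : B → ℝ :=
  fun w =>
    coclust p CX CW (xs, CW w) * marg₂ p w /
      (marg₁ (coclust p CX CW) xs * marg₂ (coclust p CX CW) (CW w))

/-- Conditional approximating distribution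
`p̂(x|w*) = p*(C_X x, w*) · p₁(x) / (p₂*(w*) · p₁*(C_X x))` on `A`. -/
def approxCondCol {A B As Bs : Type*} [Fintype A] [Fintype B] [Fintype As] [Fintype Bs]
    [DecidableEq As] [DecidableEq Bs]
    (p : A × B → ℝ) (CX : A → As) (CW : B → Bs) (ws : Bs) : A → ℝ :=
  fun x =>
    coclust p CX CW (CX x, ws) * marg₁ p x /
      (marg₂ (coclust p CX CW) ws * marg₁ (coclust p CX CW) (CX x))

/-- Mutual information `I(p) = ∑_{x,w} p(x,w) · log (p(x,w)/(p₁(x)·p₂(w)))`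
(summing over all pairs; used for the strictly positive original distribution). -/
def mutualInfoFull {A B : Type*} [Fintype A] [Fintype B] (p : A × B → ℝ) : ℝ :=
  ∑ x, ∑ w, p (x, w) * Real.log (p (x, w) / (marg₁ p x * marg₂ p w))

/-- Mutual information `I(p*) = ∑_{(x*,w*) : p*(x*,w*) > 0} p*(x*,w*) ·
log (p*(x*,w*)/(p₁*(x*)·p₂*(w*)))` (summing only over positive entries). -/
def mutualInfoPos {A B : Type*} [Fintype A] [Fintype B] (p : A × B → ℝ) : ℝ :=
  ∑ c ∈ Finset.univ.filter (fun c : A × B => 0 < p c),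
    p c * Real.log (p c / (marg₁ p c.1 * marg₂ p c.2))

/-- The co-clustering objective `ℓ_A(C_X, C_W) = I(p) − I(p*)`. -/
def lossA {A B As Bs : Type*} [Fintype A] [Fintype B] [Fintype As] [Fintype Bs]
    [DecidableEq As] [DecidableEq Bs]
    (p : A × B → ℝ) (CX : A → As) (CW : B → Bs) : ℝ :=
  mutualInfoFull p - mutualInfoPos (coclust p CX CW)

/-- The elastic coupled co-clustering objective
`ℓ_T(C_Y, C_Z) = I(q) − I(q*) + α·D(q₁*‖π) + β·D(q₂*‖ρ)`. -/
def lossT {A B As Bs : Type*} [Fintype A] [Fintype B] [Fintype As] [Fintype Bs]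
    [DecidableEq As] [DecidableEq Bs]
    (q : A × B → ℝ) (CY : A → As) (CZ : B → Bs) (π : As → ℝ) (ρ : Bs → ℝ)
    (α β : ℝ) : EReal :=
  ((mutualInfoFull q - mutualInfoPos (coclust q CY CZ) : ℝ) : EReal)
    + (α : EReal) * KLdiv (marg₁ (coclust q CY CZ)) π
    + (β : EReal) * KLdiv (marg₂ (coclust q CY CZ)) ρ

end

/-!
For fixed `x`, grouping the features `w` by cluster `C_W w = w*` turns the factor `p₂(w)` of
`p̂(x,w)` into `p₂*(w*)`, which cancels against the denominator; what is left is
`∑_{w*} p*(C_X x, w*) = p₁*(C_X x)`, which cancels the other denominator and leaves `p₁(x)`.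
Each cancellation `a / b * b = a` only needs `0 ≤ a ≤ b`, so an empty cluster, where Lean's
`a / 0 = 0` applies, does no harm.
-/

lemma div_mul_cancel_of_le {G₀ : Type*} [GroupWithZero G₀] [PartialOrder G₀] {a b : G₀}
    (ha : 0 ≤ a) (hab : a ≤ b) : a / b * b = a :=
  div_mul_cancel_of_imp fun hb => le_antisymm (hb ▸ hab) ha

section Marginals

variable {A B : Type*}

lemma apply_le_marg₁ [Fintype B] {q : A × B → ℝ} (hq : 0 ≤ q) (a : A) (b : B) :
    q (a, b) ≤ marg₁ q a :=
  Finset.single_le_sum (f := fun b => q (a, b)) (fun _ _ => hq _) (Finset.mem_univ b)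

lemma apply_le_marg₂ [Fintype A] {q : A × B → ℝ} (hq : 0 ≤ q) (a : A) (b : B) :
    q (a, b) ≤ marg₂ q b :=
  Finset.single_le_sum (f := fun a => q (a, b)) (fun _ _ => hq _) (Finset.mem_univ a)

lemma sum_marg₁ [Fintype A] [Fintype B] (q : A × B → ℝ) : ∑ a, marg₁ q a = ∑ c, q c :=
  (Fintype.sum_prod_type q).symm

end Marginals

section Coclustering

variable {X W Xs Ws : Type*} [Fintype X] [Fintype W] [DecidableEq Xs] [DecidableEq Ws]
  {p : X × W → ℝ} (CX : X → Xs) (CW : W → Ws)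

lemma coclust_nonneg (hp : 0 ≤ p) : 0 ≤ coclust p CX CW :=
  fun _ => Finset.sum_nonneg fun _ _ => Finset.sum_nonneg fun _ _ => hp _

lemma marg₁_coclust [Fintype Ws] (xs : Xs) :
    marg₁ (coclust p CX CW) xs = ∑ x with CX x = xs, marg₁ p x := by
  simp only [marg₁, coclust]
  rw [Finset.sum_comm]
  exact Finset.sum_congr rfl fun x _ => Finset.sum_fiberwise _ CW fun w => p (x, w)

lemma marg₂_coclust [Fintype Xs] (ws : Ws) :
    marg₂ (coclust p CX CW) ws = ∑ w with CW w = ws, marg₂ p w := by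
  simp only [marg₂, coclust]
  rw [Finset.sum_fiberwise _ CX fun x => ∑ w with CW w = ws, p (x, w), Finset.sum_comm]

lemma marg₁_le_marg₁_coclust [Fintype Ws] (hp : 0 ≤ p) (x : X) :
    marg₁ p x ≤ marg₁ (coclust p CX CW) (CX x) := by
  rw [marg₁_coclust]
  exact Finset.single_le_sum (fun x' _ => Finset.sum_nonneg fun w _ => hp (x', w))
    (Finset.mem_filter.2 ⟨Finset.mem_univ x, rfl⟩)

lemma marg₂_le_marg₂_coclust [Fintype Xs] (hp : 0 ≤ p) (w : W) :
    marg₂ p w ≤ marg₂ (coclust p CX CW) (CW w) := by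
  rw [marg₂_coclust]
  exact Finset.single_le_sum (fun w' _ => Finset.sum_nonneg fun x _ => hp (x, w'))
    (Finset.mem_filter.2 ⟨Finset.mem_univ w, rfl⟩)

lemma sum_comp_mul_marg₁ [Fintype Xs] [Fintype Ws] (g : Xs → ℝ) :
    ∑ x, g (CX x) * marg₁ p x = ∑ xs, g xs * marg₁ (coclust p CX CW) xs := by
  simp_rw [marg₁_coclust, Finset.mul_sum]
  rw [← Finset.sum_fiberwise Finset.univ CX]
  refine Finset.sum_congr rfl fun xs _ => Finset.sum_congr rfl fun x hx => ?_
  rw [(Finset.mem_filter.1 hx).2]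

lemma sum_comp_mul_marg₂ [Fintype Xs] [Fintype Ws] (g : Ws → ℝ) :
    ∑ w, g (CW w) * marg₂ p w = ∑ ws, g ws * marg₂ (coclust p CX CW) ws := by
  simp_rw [marg₂_coclust, Finset.mul_sum]
  rw [← Finset.sum_fiberwise Finset.univ CW]
  refine Finset.sum_congr rfl fun ws _ => Finset.sum_congr rfl fun w hw => ?_
  rw [(Finset.mem_filter.1 hw).2]

variable [Fintype Xs] [Fintype Ws]

lemma marg₁_approx (hp : 0 ≤ p) (x : X) : marg₁ (approx p CX CW) x = marg₁ p x := by
  set q := coclust p CX CW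
  have hq : 0 ≤ q := coclust_nonneg CX CW hp
  calc marg₁ (approx p CX CW) x =
      marg₁ p x / marg₁ q (CX x) * ∑ w, q (CX x, CW w) / marg₂ q (CW w) * marg₂ p w := by
        rw [Finset.mul_sum]
        exact Finset.sum_congr rfl fun w _ => by simp only [approx]; ring
    _ = marg₁ p x / marg₁ q (CX x) * marg₁ q (CX x) := by
        rw [sum_comp_mul_marg₂ CX CW fun ws => q (CX x, ws) / marg₂ q ws]
        exact congrArg _ (Finset.sum_congr rfl fun ws _ =>
          div_mul_cancel_of_le (hq _) (apply_le_marg₂ hq _ _))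
    _ = marg₁ p x := div_mul_cancel_of_le (Finset.sum_nonneg fun _ _ => hp _)
        (marg₁_le_marg₁_coclust CX CW hp x)

lemma marg₂_approx (hp : 0 ≤ p) (w : W) : marg₂ (approx p CX CW) w = marg₂ p w := by
  set q := coclust p CX CW
  have hq : 0 ≤ q := coclust_nonneg CX CW hp
  calc marg₂ (approx p CX CW) w =
      marg₂ p w / marg₂ q (CW w) * ∑ x, q (CX x, CW w) / marg₁ q (CX x) * marg₁ p x := by
        rw [Finset.mul_sum]
        exact Finset.sum_congr rfl fun x _ => by simp only [approx]; ring
    _ = marg₂ p w / marg₂ q (CW w) * marg₂ q (CW w) := by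
        rw [sum_comp_mul_marg₁ CX CW fun xs => q (xs, CW w) / marg₁ q xs]
        exact congrArg _ (Finset.sum_congr rfl fun xs _ =>
          div_mul_cancel_of_le (hq _) (apply_le_marg₁ hq _ _))
    _ = marg₂ p w := div_mul_cancel_of_le (Finset.sum_nonneg fun _ _ => hp _)
        (marg₂_le_marg₂_coclust CX CW hp w)

end Coclustering

theorem approx_marginals_general {X W Xs Ws : Type*} [Fintype X] [Fintype W]
    [Fintype Xs] [Fintype Ws] [DecidableEq Xs] [DecidableEq Ws]
    (p : X × W → ℝ) (hpos : ∀ c, 0 < p c) (hsum : ∑ c, p c = 1)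
    (CX : X → Xs) (CW : W → Ws) :
    (∀ x : X, ∑ w : W, approx p CX CW (x, w) = marg₁ p x) ∧
    (∀ w : W, ∑ x : X, approx p CX CW (x, w) = marg₂ p w) ∧
    (∑ c : X × W, approx p CX CW c = 1) := by
  have hp : 0 ≤ p := fun c => (hpos c).le
  refine ⟨marg₁_approx CX CW hp, marg₂_approx CX CW hp, ?_⟩
  rw [← sum_marg₁, ← hsum, ← sum_marg₁]
  exact Finset.sum_congr rfl fun x _ => marg₁_approx CX CW hp x

/-- The approximating distribution `p̂` is a probability mass function on `X × W`
whose marginals agree with those of `p`. -/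
theorem approx_marginals {X W Xs Ws : Type*} [Fintype X] [Fintype W] [Nonempty X] [Nonempty W]
    [Fintype Xs] [Fintype Ws] [DecidableEq Xs] [DecidableEq Ws]
    (p : X × W → ℝ) (hpos : ∀ c, 0 < p c) (hsum : ∑ c, p c = 1)
    (CX : X → Xs) (CW : W → Ws) :
    (∀ x : X, ∑ w : W, approx p CX CW (x, w) = marg₁ p x) ∧
    (∀ w : W, ∑ x : X, approx p CX CW (x, w) = marg₂ p w) ∧
    (∑ c : X × W, approx p CX CW c = 1) :=
  approx_marginals_general p hpos hsum CX CW
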